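/- arXiv:2206.11747 — 2 statements merged into one kernel-verified Lean document; each statement's English description precedes it below -/
import Mathlib

section
/- Let k be a field of characteristic 2, R = k[x,y]/(x^2) (x degree 1, y degree 2), and S = k[t] (t degree 1) with the R-module structure given by the graded ring map R → S, x ↦ 0, y ↦ t^2. Then the graded R-module M = R ⊕ S[1] (S shifted up by one degree) is free as a module over the subring P = k[y] ⊆ R (acting on S[1] via y ↦ t^2), but M is not free as an R-module. -/
set_option synthInstance.maxHeartbeats 1000000
set_option maxHeartbeats 1000000

open MvPolynomial

/-- `Rxy k = k[x,y]/(x^2)`, with `x = X 0` and `y = X 1`. -/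
noncomputable abbrev Rxy (k : Type*) [Field k] :=
  MvPolynomial (Fin 2) k ⧸
    Ideal.span {(X 0 : MvPolynomial (Fin 2) k) ^ 2}

noncomputable def Rxy.x (k : Type*) [Field k] : Rxy k :=
  Ideal.Quotient.mk _ (X 0)

noncomputable def Rxy.y (k : Type*) [Field k] : Rxy k :=
  Ideal.Quotient.mk _ (X 1)

lemma Rxy.x_sq_zero (k : Type*) [Field k] : Rxy.x k * Rxy.x k = 0 := by
  rw [Rxy.x, ← map_mul, Ideal.Quotient.eq_zero_iff_mem, ← pow_two]
  exact Ideal.subset_span rfl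

lemma Rxy.x_mul_cancel {k : Type*} [Field k] {r : Rxy k} (h : Rxy.x k * r = 0) :
    ∃ s : Rxy k, r = Rxy.x k * s := by
  obtain ⟨p, rfl⟩ := Ideal.Quotient.mk_surjective r
  have h' : (X 0 : MvPolynomial (Fin 2) k) * p ∈
      Ideal.span {(X 0 : MvPolynomial (Fin 2) k) ^ 2} := by
    rw [← Ideal.Quotient.eq_zero_iff_mem, map_mul]
    exact h
  rw [Ideal.mem_span_singleton, pow_two] at h'
  have hX : (X 0 : MvPolynomial (Fin 2) k) ≠ 0 := MvPolynomial.X_ne_zero _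
  obtain ⟨q, rfl⟩ := (mul_dvd_mul_iff_left hX).mp h'
  exact ⟨Ideal.Quotient.mk _ q, by rw [Rxy.x, ← map_mul]⟩

/-- Transfer freeness along a bijective algebra map out of an `AdjoinRoot` of a monic
polynomial. -/
lemma Module.Free.of_adjoinRoot {P A : Type*} [CommRing P] [CommRing A] [Algebra P A]
    {q : Polynomial P} (hq : q.Monic) (φ : AdjoinRoot q →ₐ[P] A)
    (hφ : Function.Bijective φ) : Module.Free P A :=
  haveI : Module.Free P (AdjoinRoot q) :=
    Module.Free.of_basis (AdjoinRoot.powerBasis' hq).basis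
  Module.Free.of_equiv (AlgEquiv.ofBijective φ hφ).toLinearEquiv

/-- Let `k` have characteristic 2, `R = k[x,y]/(x²)`, `S = k[t]` with the
`R`-module structure via `x ↦ 0, y ↦ t²`, and `P = k[y] ⊆ R` (acting on `R`
via `y ↦ y` and on `S` via `y ↦ t²`).  Then `M = R ⊕ S[1]` (the degree shift
does not affect the module structure) is free as a `P`-module but not free as
an `R`-module. -/
theorem free_over_P_not_over_R (k : Type*) [Field k] [CharP k 2]
    (f : Rxy k →ₐ[k] Polynomial k) (hfx : f (Rxy.x k) = 0)
    (hfy : f (Rxy.y k) = Polynomial.X ^ 2)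
    (g : Polynomial k →ₐ[k] Rxy k) (hg : g Polynomial.X = Rxy.y k)
    (e : Polynomial k →ₐ[k] Polynomial k) (he : e Polynomial.X = Polynomial.X ^ 2) :
    (@Module.Free (Polynomial k) (Rxy k × Polynomial k) _ _
      (@Prod.instModule (Polynomial k) (Rxy k) (Polynomial k) _ _ _
        g.toRingHom.toAlgebra.toModule e.toRingHom.toAlgebra.toModule)) ∧
    ¬ @Module.Free (Rxy k) (Rxy k × Polynomial k) _ _
      (@Prod.instModule (Rxy k) (Rxy k) (Polynomial k) _ _ _ _
        f.toRingHom.toAlgebra.toModule) := by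
  constructor
  · -- Part 1 : freeness over P = k[y]
    letI aG : Algebra (Polynomial k) (Rxy k) := g.toRingHom.toAlgebra
    -- Freeness of R = k[x,y]/(x²) over P, via AdjoinRoot (Y²) over P
    haveI hRfree : Module.Free (Polynomial k) (Rxy k) := by
      set q : Polynomial (Polynomial k) := Polynomial.X ^ 2 with hqdef
      have hq : q.Monic := Polynomial.monic_X_pow 2
      have haev : Polynomial.aeval (Rxy.x k) q = 0 := by
        rw [hqdef, map_pow, Polynomial.aeval_X, pow_two, Rxy.x_sq_zero]
      set φ : AdjoinRoot q →ₐ[Polynomial k] Rxy k := AdjoinRoot.liftAlgHom q (Algebra.ofId _ _) (Rxy.x k)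
        (by rw [Algebra.toRingHom_ofId, ← Polynomial.aeval_def]; exact haev)
        with hφdef
      have hroot2 : AdjoinRoot.root q ^ 2 = 0 := by
        have h := AdjoinRoot.mk_self (f := q)
        rwa [hqdef, map_pow, AdjoinRoot.mk_X] at h
      set ψ0 : MvPolynomial (Fin 2) k →ₐ[k] AdjoinRoot q :=
        MvPolynomial.aeval
          ![AdjoinRoot.root q, algebraMap (Polynomial k) (AdjoinRoot q) Polynomial.X]
        with hψ0def
      have hψ0x : ψ0 (X 0) = AdjoinRoot.root q := by simp [hψ0def]
      have hψ0y : ψ0 (X 1) = algebraMap (Polynomial k) (AdjoinRoot q) Polynomial.X := by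
        simp [hψ0def]
      have hψ0C : ∀ a : k, ψ0 (MvPolynomial.C a) = algebraMap k (AdjoinRoot q) a :=
        fun a => MvPolynomial.aeval_C _ a
      have hker : ∀ p ∈ Ideal.span {(X 0 : MvPolynomial (Fin 2) k) ^ 2}, ψ0 p = 0 := by
        intro p hp
        rw [Ideal.mem_span_singleton] at hp
        obtain ⟨p', rfl⟩ := hp
        rw [map_mul, map_pow, hψ0x, hroot2, zero_mul]
      set ψ : Rxy k →ₐ[k] AdjoinRoot q := Ideal.Quotient.liftₐ _ ψ0 hker with hψdef
      have hψmk : ∀ p, ψ (Ideal.Quotient.mk _ p) = ψ0 p := fun p => rfl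
      have hCC : ∀ a : k, algebraMap k (AdjoinRoot q) a
          = algebraMap (Polynomial k) (AdjoinRoot q) (Polynomial.C a) := fun a => rfl
      have hcomp : ψ.toRingHom.comp g.toRingHom = algebraMap (Polynomial k) (AdjoinRoot q) := by
        apply Polynomial.ringHom_ext
        · intro a
          show ψ (g (Polynomial.C a)) = _
          have h3 : g (Polynomial.C a) = algebraMap k (Rxy k) a := g.commutes a
          rw [h3, ψ.commutes, hCC]
        · show ψ (g Polynomial.X) = _
          rw [hg, Rxy.y, hψmk, hψ0y]
      have hcomm : ∀ a : Polynomial k,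
          ψ (algebraMap (Polynomial k) (Rxy k) a)
            = algebraMap (Polynomial k) (AdjoinRoot q) a :=
        fun a => RingHom.congr_fun hcomp a
      set ψ' : Rxy k →ₐ[Polynomial k] AdjoinRoot q := ⟨ψ.toRingHom, hcomm⟩ with hψ'def
      have hlr : ∀ a, ψ (φ a) = a := by
        have hcomp2 : ψ'.comp φ = AlgHom.id (Polynomial k) (AdjoinRoot q) := by
          apply AdjoinRoot.algHom_ext
          show ψ (φ (AdjoinRoot.root q)) = AdjoinRoot.root q
          rw [hφdef, AdjoinRoot.liftAlgHom_root, Rxy.x, hψmk, hψ0x]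
        exact fun a => DFunLike.congr_fun hcomp2 a
      have hrl : ∀ r, φ (ψ r) = r := by
        have hcomp2 : φ.toRingHom.comp ψ.toRingHom = RingHom.id (Rxy k) := by
          apply Ideal.Quotient.ringHom_ext
          apply MvPolynomial.ringHom_ext
          · intro a
            show φ (ψ (Ideal.Quotient.mk _ (MvPolynomial.C a)))
              = Ideal.Quotient.mk _ (MvPolynomial.C a)
            rw [hψmk, hψ0C, hCC, φ.commutes]
            show g (Polynomial.C a) = _
            have h4 : g (Polynomial.C a) = algebraMap k (Rxy k) a := g.commutes a
            rw [h4]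
            rfl
          · intro i
            fin_cases i
            · show φ (ψ (Ideal.Quotient.mk _ (X 0))) = Ideal.Quotient.mk _ (X 0)
              rw [hψmk, hψ0x, hφdef, AdjoinRoot.liftAlgHom_root, Rxy.x]
            · show φ (ψ (Ideal.Quotient.mk _ (X 1))) = Ideal.Quotient.mk _ (X 1)
              rw [hψmk, hψ0y, φ.commutes]
              show g Polynomial.X = _
              rw [hg, Rxy.y]
        exact fun r => RingHom.congr_fun hcomp2 r
      have hbij : Function.Bijective φ :=
        Function.bijective_iff_has_inverse.mpr ⟨ψ, hlr, hrl⟩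
      exact Module.Free.of_adjoinRoot hq φ hbij
    -- Freeness of S = k[t] over P, via AdjoinRoot (Y² - y) over P
    letI aE : Algebra (Polynomial k) (Polynomial k) := e.toRingHom.toAlgebra
    haveI hSfree : @Module.Free (Polynomial k) (Polynomial k) _ _ aE.toModule := by
      set q : Polynomial (Polynomial k) := Polynomial.X ^ 2 - Polynomial.C Polynomial.X
        with hqdef
      letI aAR : Algebra (Polynomial k) (AdjoinRoot q) :=
        @AdjoinRoot.instAlgebra (Polynomial k) (Polynomial k) _ q _
          (Algebra.id (Polynomial k))
      have hq : q.Monic := Polynomial.monic_X_pow_sub_C _ (by norm_num)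
      have haev : Polynomial.aeval (Polynomial.X : Polynomial k) q = 0 := by
        rw [hqdef, map_sub, map_pow, Polynomial.aeval_X, Polynomial.aeval_C]
        show _ - e Polynomial.X = 0
        rw [he, sub_self]
      set φ : AdjoinRoot q →ₐ[Polynomial k] Polynomial k :=
        @AdjoinRoot.liftAlgHom (Polynomial k) (Polynomial k) (Polynomial k) _ _ _
          (Algebra.id _) aE q (@Algebra.ofId (Polynomial k) (Polynomial k) _ _ aE) Polynomial.X
          (by rw [Algebra.toRingHom_ofId, ← Polynomial.aeval_def]; exact haev) with hφdef
      have hroot2 : AdjoinRoot.root q ^ 2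
          = algebraMap (Polynomial k) (AdjoinRoot q) Polynomial.X := by
        have h := AdjoinRoot.mk_self (f := q)
        rw [hqdef, map_sub, map_pow, AdjoinRoot.mk_X, AdjoinRoot.mk_C, sub_eq_zero] at h
        exact h
      set ψ : Polynomial k →ₐ[k] AdjoinRoot q := Polynomial.aeval (AdjoinRoot.root q)
        with hψdef
      have hψX : ψ Polynomial.X = AdjoinRoot.root q := Polynomial.aeval_X _
      have hCC : ∀ a : k, algebraMap k (AdjoinRoot q) a
          = algebraMap (Polynomial k) (AdjoinRoot q) (Polynomial.C a) := fun a => rfl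
      have hcomp : ψ.toRingHom.comp e.toRingHom
          = algebraMap (Polynomial k) (AdjoinRoot q) := by
        apply Polynomial.ringHom_ext
        · intro a
          show ψ (e (Polynomial.C a)) = _
          have h3 : e (Polynomial.C a) = Polynomial.C a := by
            have := e.commutes a
            exact this
          rw [h3]
          show ψ (algebraMap k (Polynomial k) a) = _
          rw [ψ.commutes, hCC]
        · show ψ (e Polynomial.X) = _
          rw [he, map_pow, hψX, hroot2]
      have hcomm : ∀ a : Polynomial k,
          ψ (algebraMap (Polynomial k) (Polynomial k) a)
            = algebraMap (Polynomial k) (AdjoinRoot q) a :=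
        fun a => RingHom.congr_fun hcomp a
      set ψ' : Polynomial k →ₐ[Polynomial k] AdjoinRoot q := ⟨ψ.toRingHom, hcomm⟩
        with hψ'def
      have hlr : ∀ a, ψ (φ a) = a := by
        have hcomp2 : ψ'.comp φ = AlgHom.id (Polynomial k) (AdjoinRoot q) := by
          apply AdjoinRoot.algHom_ext
          show ψ (φ (AdjoinRoot.root q)) = AdjoinRoot.root q
          rw [hφdef, @AdjoinRoot.liftAlgHom_root (Polynomial k) (Polynomial k) (Polynomial k) _ _ _ (Algebra.id _) aE, hψX]
        exact fun a => DFunLike.congr_fun hcomp2 a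
      have hrl : ∀ r, φ (ψ r) = r := by
        have hcomp2 : φ.toRingHom.comp ψ.toRingHom = RingHom.id (Polynomial k) := by
          apply Polynomial.ringHom_ext
          · intro a
            show φ (ψ (Polynomial.C a)) = Polynomial.C a
            have h1 : ψ (Polynomial.C a) = algebraMap k (AdjoinRoot q) a := by
              rw [hψdef]; exact Polynomial.aeval_C (x := AdjoinRoot.root q) a
            rw [h1, hCC, φ.commutes]
            show e (Polynomial.C a) = _
            exact e.commutes a
          · show φ (ψ Polynomial.X) = Polynomial.X
            rw [hψX, hφdef, @AdjoinRoot.liftAlgHom_root (Polynomial k) (Polynomial k) (Polynomial k) _ _ _ (Algebra.id _) aE]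
        exact fun r => RingHom.congr_fun hcomp2 r
      have hbij : Function.Bijective φ :=
        Function.bijective_iff_has_inverse.mpr ⟨ψ, hlr, hrl⟩
      exact Module.Free.of_adjoinRoot hq φ hbij
    exact @Module.Free.prod (Polynomial k) (Rxy k) (Polynomial k) _ _ aG.toModule _ aE.toModule
      hRfree hSfree
  · -- Part 2 : not free over R
    letI aF : Module (Rxy k) (Polynomial k) := f.toRingHom.toAlgebra.toModule
    intro hF
    haveI := hF
    let M := Rxy k × Polynomial k
    let b := Module.Free.chooseBasis (Rxy k) M
    set m : M := ((0 : Rxy k), (1 : Polynomial k)) with hm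
    have hxm : Rxy.x k • m = 0 := by
      have : Rxy.x k • m = (Rxy.x k * 0, f (Rxy.x k) * 1) := rfl
      rw [this, hfx]; simp; rfl
    set c := b.repr m with hcdef
    have hc : ∀ i, Rxy.x k * c i = 0 := by
      intro i
      have h1 : Rxy.x k • c = 0 := by
        rw [hcdef, ← map_smul, hxm, map_zero]
      have h2 := DFunLike.congr_fun h1 i
      simpa using h2
    have hxd : ∀ i, ∃ s, c i = Rxy.x k * s := fun i => Rxy.x_mul_cancel (hc i)
    have hfc : ∀ i, f (c i) = 0 := by
      intro i
      obtain ⟨s, hs⟩ := hxd i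
      rw [hs, map_mul, hfx, zero_mul]
    have h1 : (1 : Polynomial k) = 0 := by
      have h2 := congrArg Prod.snd (b.linearCombination_repr m)
      rw [Finsupp.linearCombination_apply, Finsupp.sum] at h2
      rw [Prod.snd_sum] at h2
      have h3 : ∀ i ∈ c.support, (c i • b i).2 = 0 := by
        intro i _
        have : (c i • b i).2 = f (c i) * (b i).2 := rfl
        rw [this, hfc, zero_mul]
      rw [Finset.sum_congr rfl h3, Finset.sum_const_zero] at h2
      exact h2.symm
    exact one_ne_zero h1
end

section
/- Let n ≥ 3. The number ℓ_n of Lyndon words of length n over {0,1} equals L(n,1), the number of Lyndon words of length n with exactly one (circular) block of zeros, if and only if n = 3 or n = 4. -/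
/-- A Lyndon word: a nonempty word strictly smaller (lexicographically) than
all of its nontrivial rotations.  Here `false` plays the role of the letter
`0` and `true` of the letter `1`. -/
def IsLyndon (w : List Bool) : Prop :=
  w ≠ [] ∧ ∀ k : ℕ, 0 < k → k < w.length → w < w.rotate k

/-- `lyndonCount d` is the number `ℓ_d` of Lyndon words of length `d` over
the alphabet `{0,1}`. -/
noncomputable def lyndonCount (d : ℕ) : ℕ :=
  Set.ncard {w : List Bool | w.length = d ∧ IsLyndon w}

/-- The number of (circular) maximal blocks of zeros of a binary word,
counted as the number of positions `i` carrying a `0` whose circular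
successor carries a `1`. -/
noncomputable def zeroBlockCount (w : List Bool) : ℕ :=
  Set.ncard {i : ℕ | i < w.length ∧ w.getD i true = false ∧
    w.getD ((i + 1) % w.length) true = true}

/-- `lyndonCountOneBlock n = L(n,1)`, the number of Lyndon words of length
`n` with exactly one circular block of zeros. -/
noncomputable def lyndonCountOneBlock (n : ℕ) : ℕ :=
  Set.ncard {w : List Bool | w.length = n ∧ IsLyndon w ∧ zeroBlockCount w = 1}

instance : DecidablePred IsLyndon := fun w =>
  decidable_of_iff (w ≠ [] ∧ ∀ k < w.length, 0 < k → w < w.rotate k)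
    (by unfold IsLyndon; tauto)

lemma zbc_eq (w : List Bool) : zeroBlockCount w =
    ((Finset.range w.length).filter (fun i => w.getD i true = false ∧
      w.getD ((i + 1) % w.length) true = true)).card := by
  rw [zeroBlockCount, ← Set.ncard_coe_finset]
  congr 1
  ext i
  simp [Finset.mem_filter, Finset.mem_range, and_assoc]

lemma lex_append_left {r : Bool → Bool → Prop} {l₁ l₂ : List Bool} (p : List Bool)
    (h : List.Lex r l₁ l₂) : List.Lex r (p ++ l₁) (p ++ l₂) := by
  induction p with
  | nil => exact h
  | cons a p ih => exact List.Lex.cons ih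

/-- The witness word `0^a 1 0 1`. -/
def wit (a : ℕ) : List Bool := List.replicate a false ++ [true, false, true]

lemma wit_length (a : ℕ) : (wit a).length = a + 3 := by simp [wit]

lemma wit_getD_lt (a i : ℕ) (h : i < a) : (wit a).getD i true = false := by
  rw [wit, List.getD_append _ _ _ _ (by simpa using h),
    List.getD_eq_getElem _ _ (by simpa using h)]
  simp

lemma wit_getD_ge (a i : ℕ) (h : a ≤ i) :
    (wit a).getD i true = ([true, false, true] : List Bool).getD (i - a) true := by
  rw [wit, List.getD_append_right _ _ _ _ (by simpa using h), List.length_replicate]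

lemma wit_lyndon (a : ℕ) (ha : 2 ≤ a) : IsLyndon (wit a) := by
  constructor
  · simp [wit]
  · intro k hk hklen
    rw [wit_length] at hklen
    show List.Lex (· < ·) _ _
    rw [List.rotate_eq_drop_append_take (by rw [wit_length]; omega)]
    rcases lt_or_ge k a with hka | hka
    · -- rotate = 0^(a-k) ++ [t,f,t] ++ 0^k ; w = 0^(a-k) ++ 0^k ++ [t,f,t]
      have hdrop : (wit a).drop k = List.replicate (a - k) false ++ [true, false, true] := by
        rw [wit, List.drop_append_of_le_length (by simp; omega), List.drop_replicate]
      have htake : (wit a).take k = List.replicate k false := by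
        rw [wit, List.take_append_of_le_length (by simp; omega), List.take_replicate,
          min_eq_left hka.le]
      have hw : wit a = List.replicate (a - k) false ++
          (List.replicate k false ++ [true, false, true]) := by
        rw [wit, ← List.append_assoc, ← List.replicate_add]
        congr 2
        omega
      rw [hdrop, htake, hw, List.append_assoc]
      apply lex_append_left
      have hk' : List.replicate k false ++ [true, false, true] =
          false :: (List.replicate (k - 1) false ++ [true, false, true]) := by
        rw [show k = 1 + (k - 1) by omega, List.replicate_add]
        simp
      rw [hk']
      exact List.Lex.rel (by simp)
    · -- k ≥ a
      have hdrop : (wit a).drop k = ([true, false, true] : List Bool).drop (k - a) := by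
        rw [wit, List.drop_append, List.drop_replicate, List.length_replicate,
          show a - k = 0 by omega]
        simp
      have hk3 : k = a ∨ k = a + 1 ∨ k = a + 2 := by omega
      rcases hk3 with hkeq | hkeq | hkeq <;> rw [hkeq] at hdrop ⊢
      · -- k = a : rotate = [t,f,t] ++ ...
        rw [hdrop]
        simp only [Nat.sub_self, List.drop_zero]
        have hw : wit a = false :: (List.replicate (a - 1) false ++ [true, false, true]) := by
          rw [wit, show a = 1 + (a - 1) by omega, List.replicate_add]
          simp
        rw [hw]
        exact List.Lex.rel (by simp)
      · -- k = a + 1 : rotate = [f,t] ++ take, take = 0^a ++ [t]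
        rw [hdrop, show a + 1 - a = 1 by omega]
        have htake : (wit a).take (a + 1) = List.replicate a false ++ [true] := by
          rw [wit, List.take_append, List.take_replicate, List.length_replicate,
            min_eq_right (by omega), show a + 1 - a = 1 by omega]
          rfl
        rw [htake]
        have hw : wit a = false :: false ::
            (List.replicate (a - 2) false ++ [true, false, true]) := by
          rw [wit, show a = 2 + (a - 2) by omega, List.replicate_add]
          simp
        rw [hw]
        show List.Lex (· < ·) _ (false :: true :: _)
        exact List.Lex.cons (List.Lex.rel (by simp))
      · -- k = a + 2 : rotate starts with true
        rw [hdrop, show a + 2 - a = 2 by omega]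
        have hw : wit a = false :: (List.replicate (a - 1) false ++ [true, false, true]) := by
          rw [wit, show a = 1 + (a - 1) by omega, List.replicate_add]
          simp
        rw [hw]
        show List.Lex (· < ·) _ (true :: _)
        exact List.Lex.rel (by simp)

lemma wit_zbc (a : ℕ) (ha : 2 ≤ a) : zeroBlockCount (wit a) = 2 := by
  have hset : {i : ℕ | i < (wit a).length ∧ (wit a).getD i true = false ∧
      (wit a).getD ((i + 1) % (wit a).length) true = true} = {a - 1, a + 1} := by
    ext i
    simp only [Set.mem_setOf_eq, Set.mem_insert_iff, Set.mem_singleton_iff, wit_length]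
    constructor
    · rintro ⟨h1, h2, h3⟩
      by_contra hne
      push_neg at hne
      obtain ⟨hne1, hne2⟩ := hne
      rcases lt_or_ge i a with hia | hia
      · -- i < a, i ≠ a - 1, so i + 1 < a : successor is false
        have : i + 1 < a := by omega
        rw [Nat.mod_eq_of_lt (by omega), wit_getD_lt a (i + 1) this] at h3
        exact absurd h3 (by simp)
      · -- i ∈ {a, a+2} (since i ≠ a+1, i < a+3): w i = true
        have : i = a ∨ i = a + 2 := by omega
        rcases this with hi | hi
        · rw [hi, wit_getD_ge a a le_rfl, Nat.sub_self] at h2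
          exact absurd h2 (by simp)
        · rw [hi, wit_getD_ge a (a + 2) (by omega), show a + 2 - a = 2 by omega] at h2
          exact absurd h2 (by simp)
    · rintro (rfl | rfl)
      · refine ⟨by omega, ?_, ?_⟩
        · exact wit_getD_lt a (a - 1) (by omega)
        · rw [show a - 1 + 1 = a by omega, Nat.mod_eq_of_lt (by omega),
            wit_getD_ge a a le_rfl, Nat.sub_self]
          rfl
      · refine ⟨by omega, ?_, ?_⟩
        · rw [wit_getD_ge a (a + 1) (by omega), show a + 1 - a = 1 by omega]
          rfl
        · rw [Nat.mod_eq_of_lt (by omega), wit_getD_ge a (a + 2) (by omega),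
            show a + 2 - a = 2 by omega]
          rfl
  rw [zeroBlockCount, hset, Set.ncard_pair (by omega)]

lemma finite_lyndon (n : ℕ) : {w : List Bool | w.length = n ∧ IsLyndon w}.Finite :=
  (List.finite_length_eq Bool n).subset fun _ h => h.1

/-- For `n ≥ 3`, the number `ℓ_n` of Lyndon words of length `n` equals the
number `L(n,1)` of Lyndon words of length `n` with exactly one circular block
of zeros if and only if `n = 3` or `n = 4`. -/
theorem lyndon_eq_one_block_iff (n : ℕ) (hn : 3 ≤ n) :
    lyndonCount n = lyndonCountOneBlock n ↔ n = 3 ∨ n = 4 := by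
  constructor
  · intro h
    by_contra hne
    push_neg at hne
    have hn5 : 5 ≤ n := by omega
    -- strict subset gives strict inequality
    have hsub : {w : List Bool | w.length = n ∧ IsLyndon w ∧ zeroBlockCount w = 1} ⊂
        {w : List Bool | w.length = n ∧ IsLyndon w} := by
      constructor
      · rintro w ⟨h1, h2, _⟩; exact ⟨h1, h2⟩
      · intro hsup
        have hw : wit (n - 3) ∈ {w : List Bool | w.length = n ∧ IsLyndon w} :=
          ⟨by rw [wit_length]; omega, wit_lyndon _ (by omega)⟩
        have := (hsup hw).2.2
        rw [wit_zbc _ (by omega)] at this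
        omega
    have := Set.ncard_lt_ncard hsub (finite_lyndon n)
    rw [lyndonCount, lyndonCountOneBlock] at h
    omega
  · intro h
    have hset : ∀ (m : ℕ), m = 3 ∨ m = 4 →
        {w : List Bool | w.length = m ∧ IsLyndon w} =
        {w : List Bool | w.length = m ∧ IsLyndon w ∧ zeroBlockCount w = 1} := by
      rintro m hm
      ext w
      simp only [Set.mem_setOf_eq]
      refine ⟨fun ⟨h1, h2⟩ => ⟨h1, h2, ?_⟩, fun ⟨h1, h2, _⟩ => ⟨h1, h2⟩⟩
      rw [zbc_eq]
      rcases hm with rfl | rfl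
      · match w, h1 with
        | [a, b, c], _ => revert h2; revert a b c; decide
      · match w, h1 with
        | [a, b, c, d], _ => revert h2; revert a b c d; decide
    rw [lyndonCount, lyndonCountOneBlock, hset n h]
end
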